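/- arXiv:0902.3464 — 5 statements merged into one kernel-verified Lean document; each statement's English description precedes it below -/
import Mathlib

section
/- Let G be a profinite group and A a commutative ring with the discrete topology. The natural map Maps_cts(G, A) ⊗_A Maps_cts(G, A) → Maps_cts(G × G, A), sending f ⊗ g to the function (x,y) ↦ f(x)g(y), is an isomorphism of A-algebras, where G × G has the product topology. -/
/-! For compact `X` and discrete `A`, the finitely many functions occurring in a tensor
`∑ i, f i ⊗ₜ n i ∈ C(X, A) ⊗[A] N` are jointly locally constant, so the fibres of `x ↦ (f i x)ᵢ`
form a finite clopen partition of `X`; rewriting the tensor along it as `∑ b, 1_{Φ = b} ⊗ₜ h b`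
shows that evaluation identifies `C(X, A) ⊗[A] N` with the locally constant maps `X → N`.
For `N = C(Y, A)` with `Y` compact, `C(Y, A)` is discrete, so these are exactly the curried
continuous maps `X × Y → A`. -/

open TensorProduct

namespace ContinuousMap

section FiberIndicator

variable {X A β : Type*} [TopologicalSpace X] [TopologicalSpace A] [DecidableEq β] {Φ : X → β}

def fiberIndicator [Zero A] [One A] (hΦ : IsLocallyConstant Φ) (b : β) : C(X, A) where
  toFun x := if Φ x = b then 1 else 0
  continuous_toFun := (hΦ.comp fun c ↦ if c = b then (1 : A) else 0).continuous

variable [CompactSpace X]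

theorem sum_fiberIndicator_smul [Semiring A] {M : Type*} [AddCommMonoid M] [Module A M]
    (hΦ : IsLocallyConstant Φ) (h : β → M) (x : X) :
    ∑ b ∈ hΦ.range_finite.toFinset, fiberIndicator (A := A) hΦ b x • h b = h (Φ x) := by
  simp [fiberIndicator, ite_smul, Finset.sum_ite_eq]

theorem eq_sum_smul_fiberIndicator [CommSemiring A] [IsTopologicalSemiring A]
    (hΦ : IsLocallyConstant Φ) (f : C(X, A)) (g : β → A) (hf : ∀ x, f x = g (Φ x)) :
    f = ∑ b ∈ hΦ.range_finite.toFinset, g b • fiberIndicator hΦ b := by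
  ext x
  simp only [hf, coe_sum, coe_smul, Finset.sum_apply, Pi.smul_apply, smul_eq_mul]
  rw [← sum_fiberIndicator_smul (A := A) hΦ g x]
  simp_rw [smul_eq_mul, mul_comm]

end FiberIndicator

section TensorToFun

variable {X A N : Type*} [TopologicalSpace X] [CommRing A] [TopologicalSpace A]
  [IsTopologicalRing A] [AddCommGroup N] [Module A N]

def tensorToFun : C(X, A) ⊗[A] N →ₗ[A] X → N :=
  TensorProduct.lift <| LinearMap.mk₂ A (fun f n x ↦ f x • n)
    (fun f f' n ↦ by ext; simp [add_smul]) (fun a f n ↦ by ext; simp [mul_smul])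
    (fun f n n' ↦ by ext; simp) (fun a f n ↦ by ext; simp [smul_comm a])

@[simp]
theorem tensorToFun_tmul (f : C(X, A)) (n : N) : tensorToFun (f ⊗ₜ[A] n) = fun x ↦ f x • n :=
  TensorProduct.lift.tmul _ _

variable {β : Type*} [DecidableEq β] [CompactSpace X] {Φ : X → β}

noncomputable def fiberSum (hΦ : IsLocallyConstant Φ) (h : β → N) : C(X, A) ⊗[A] N :=
  ∑ b ∈ hΦ.range_finite.toFinset, fiberIndicator hΦ b ⊗ₜ h b

theorem tensorToFun_fiberSum (hΦ : IsLocallyConstant Φ) (h : β → N) :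
    tensorToFun (fiberSum (A := A) hΦ h) = h ∘ Φ := by
  ext x
  simp [fiberSum, sum_fiberIndicator_smul]

theorem fiberSum_eq_zero (hΦ : IsLocallyConstant Φ) {h : β → N} (hh : h ∘ Φ = 0) :
    fiberSum (A := A) hΦ h = 0 := by
  refine Finset.sum_eq_zero fun b hb ↦ ?_
  obtain ⟨x, rfl⟩ := hΦ.range_finite.mem_toFinset.1 hb
  rw [show h (Φ x) = 0 from congrFun hh x, tmul_zero]

theorem sum_tmul_eq_fiberSum {ι : Type*} [Fintype ι] [DecidableEq (ι → A)]
    (f : ι → C(X, A)) (n : ι → N) (hf : IsLocallyConstant fun x i ↦ f i x) :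
    ∑ i, f i ⊗ₜ[A] n i = fiberSum hf fun v ↦ ∑ i, v i • n i := by
  calc ∑ i, f i ⊗ₜ[A] n i
      = ∑ i, ∑ v ∈ hf.range_finite.toFinset, (v i • fiberIndicator hf v) ⊗ₜ[A] n i := by
        simp_rw [← sum_tmul]
        congr! with i
        exact eq_sum_smul_fiberIndicator hf (f i) (fun v ↦ v i) fun x ↦ rfl
    _ = fiberSum hf fun v ↦ ∑ i, v i • n i := by
        rw [Finset.sum_comm]
        simp_rw [fiberSum, tmul_sum, smul_tmul]

theorem tensorToFun_injective [DiscreteTopology A] :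
    Function.Injective (tensorToFun : C(X, A) ⊗[A] N → X → N) := by
  classical
  refine (injective_iff_map_eq_zero _).2 fun t ht ↦ ?_
  obtain ⟨k, f, n, rfl⟩ := exists_sum_tmul_eq t
  have hf : IsLocallyConstant fun x i ↦ f i x :=
    (IsLocallyConstant.iff_continuous _).2 (continuous_pi fun i ↦ (f i).continuous)
  rw [sum_tmul_eq_fiberSum f n hf] at ht ⊢
  exact fiberSum_eq_zero hf (by rwa [tensorToFun_fiberSum] at ht)

theorem exists_tensorToFun_eq [DecidableEq N] {F : X → N} (hF : IsLocallyConstant F) :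
    ∃ t : C(X, A) ⊗[A] N, tensorToFun t = F :=
  ⟨fiberSum hF id, tensorToFun_fiberSum hF id⟩

end TensorToFun

instance discreteTopology {Y A : Type*} [TopologicalSpace Y] [CompactSpace Y]
    [TopologicalSpace A] [DiscreteTopology A] : DiscreteTopology C(Y, A) := by
  refine discreteTopology_iff_isOpen_singleton.2 fun f ↦ ?_
  have hrange : (Set.range f).Finite := (isCompact_range f.continuous).finite_of_discrete
  have hf : {f} = ⋂ a ∈ Set.range f, {g : C(Y, A) | Set.MapsTo g (f ⁻¹' {a}) {a}} := by
    ext g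
    simp only [Set.mem_singleton_iff, Set.mem_iInter, Set.mem_ofPred_eq, Set.mem_range]
    refine ⟨by rintro rfl; simp [Set.MapsTo], fun hg ↦ ext fun y ↦ hg _ ⟨y, rfl⟩ rfl⟩
  rw [hf]
  exact hrange.isOpen_biInter fun a _ ↦ isOpen_setOfPred_mapsTo
    ((isClosed_singleton.preimage f.continuous).isCompact) (isOpen_discrete _)

section TensorAlgHom

variable {X Y : Type*} [TopologicalSpace X] [TopologicalSpace Y]

def tensorAlgHom (A : Type*) [CommRing A] [TopologicalSpace A] [IsTopologicalRing A] :
    C(X, A) ⊗[A] C(Y, A) →ₐ[A] C(X × Y, A) :=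
  Algebra.TensorProduct.productMap (compRightAlgHom A A .fst) (compRightAlgHom A A .snd)

variable {A : Type*} [CommRing A] [TopologicalSpace A] [IsTopologicalRing A]

@[simp]
theorem tensorAlgHom_tmul_apply (f : C(X, A)) (g : C(Y, A)) (x : X) (y : Y) :
    tensorAlgHom A (f ⊗ₜ[A] g) (x, y) = f x * g y := by
  simp [tensorAlgHom]

theorem tensorAlgHom_apply (t : C(X, A) ⊗[A] C(Y, A)) (x : X) (y : Y) :
    tensorAlgHom A t (x, y) = tensorToFun t x y := by
  induction t with
  | zero => simp
  | tmul f g => simp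
  | add t t' ht ht' => simp [ht, ht']

variable [CompactSpace X] [DiscreteTopology A]

theorem tensorAlgHom_injective :
    Function.Injective (tensorAlgHom A : C(X, A) ⊗[A] C(Y, A) → C(X × Y, A)) := by
  refine (injective_iff_map_eq_zero _).2 fun t ht ↦ tensorToFun_injective ?_
  ext x y
  simp [← tensorAlgHom_apply, ht]

theorem tensorAlgHom_surjective [CompactSpace Y] :
    Function.Surjective (tensorAlgHom A : C(X, A) ⊗[A] C(Y, A) → C(X × Y, A)) := by
  classical
  intro F
  obtain ⟨t, ht⟩ := exists_tensorToFun_eq (A := A)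
    ((IsLocallyConstant.iff_continuous _).2 F.curry.continuous)
  refine ⟨t, ext fun ⟨x, y⟩ ↦ ?_⟩
  rw [tensorAlgHom_apply, ht, curry_apply]

noncomputable def tensorAlgEquiv [CompactSpace Y] : C(X, A) ⊗[A] C(Y, A) ≃ₐ[A] C(X × Y, A) :=
  .ofBijective (tensorAlgHom A) ⟨tensorAlgHom_injective, tensorAlgHom_surjective⟩

end TensorAlgHom

end ContinuousMap

theorem stmt6_general {G : Type*} [TopologicalSpace G]
    [CompactSpace G]
    {A : Type*} [CommRing A] [TopologicalSpace A] [DiscreteTopology A] :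
    ∃ e : (C(G, A) ⊗[A] C(G, A)) ≃ₐ[A] C(G × G, A),
      ∀ (f g : C(G, A)) (x y : G), e (f ⊗ₜ[A] g) (x, y) = f x * g y :=
  ⟨ContinuousMap.tensorAlgEquiv, ContinuousMap.tensorAlgHom_tmul_apply⟩

/-- For a profinite group `G` and a commutative ring `A` with the discrete topology,
the natural map `Maps_cts(G,A) ⊗_A Maps_cts(G,A) → Maps_cts(G × G, A)`,
`f ⊗ g ↦ ((x,y) ↦ f x * g y)`, is an isomorphism of `A`-algebras. -/
theorem stmt6 {G : Type*} [Group G] [TopologicalSpace G] [IsTopologicalGroup G]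
    [CompactSpace G] [T2Space G] [TotallyDisconnectedSpace G]
    {A : Type*} [CommRing A] [TopologicalSpace A] [DiscreteTopology A] [IsTopologicalRing A] :
    ∃ e : (C(G, A) ⊗[A] C(G, A)) ≃ₐ[A] C(G × G, A),
      ∀ (f g : C(G, A)) (x y : G), e (f ⊗ₜ[A] g) (x, y) = f x * g y :=
  stmt6_general
end

section
/- Let L/K be a finite Galois extension of fields with Galois group G. The K-algebra of functions f: G → L satisfying f(hgh^{-1}) = h(f(g)) for all g, h ∈ G is isomorphic as a K-algebra to the product ∏_{c ∈ S} L^{C_c}, where S is a set of representatives of the conjugacy classes of G and C_c is the centralizer of c in G, with L^{C_c} the fixed field. -/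
/-!
A twisted class function is determined by its values on conjugacy class representatives,
since `f (h c h⁻¹) = h • f c`. Conversely a value `x` at `c` extends to the class of `c` by
`h c h⁻¹ ↦ h • x`, and this is well defined exactly when `x` is fixed by the centralizer of `c`,
because `h₁ c h₁⁻¹ = h₂ c h₂⁻¹` means `h₂⁻¹ h₁` centralizes `c`.
-/

namespace MulAction

variable {G X : Type*} [Group G] [MulAction G X]

def IsTwistedClassFunction (f : G → X) : Prop :=
  ∀ g h : G, f (h * g * h⁻¹) = h • f g

lemma IsTwistedClassFunction.centralizer_le_stabilizer {f : G → X}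
    (hf : IsTwistedClassFunction f) (g : G) :
    Subgroup.centralizer {g} ≤ stabilizer G (f g) := by
  intro h hh
  rw [Subgroup.mem_centralizer_singleton_iff] at hh
  rw [mem_stabilizer_iff, ← hf, hh, mul_inv_cancel_right]

lemma smul_eq_smul_of_conj_eq {g : G} {x : X}
    (hx : Subgroup.centralizer {g} ≤ stabilizer G x) {h₁ h₂ : G}
    (heq : h₁ * g * h₁⁻¹ = h₂ * g * h₂⁻¹) : h₁ • x = h₂ • x := by
  have hcomm : h₂⁻¹ * h₁ ∈ Subgroup.centralizer {g} := by
    rw [Subgroup.mem_centralizer_singleton_iff]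
    calc h₂⁻¹ * h₁ * g = h₂⁻¹ * (h₁ * g * h₁⁻¹) * h₁ := by group
      _ = g * (h₂⁻¹ * h₁) := by rw [heq]; group
  rw [← inv_smul_eq_iff, smul_smul, ← mem_stabilizer_iff]
  exact hx hcomm

lemma exists_conj_rep_eq {c : ConjClasses G → G} (hc : ∀ q, ConjClasses.mk (c q) = q)
    (g : G) : ∃ h : G, h * c (ConjClasses.mk g) * h⁻¹ = g :=
  isConj_iff.mp (ConjClasses.mk_eq_mk_iff_isConj.mp (hc _))

lemma IsTwistedClassFunction.ext_of_eqOn_reps {c : ConjClasses G → G}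
    (hc : ∀ q, ConjClasses.mk (c q) = q) {f₁ f₂ : G → X}
    (hf₁ : IsTwistedClassFunction f₁) (hf₂ : IsTwistedClassFunction f₂)
    (heq : ∀ q, f₁ (c q) = f₂ (c q)) : f₁ = f₂ := by
  funext g
  obtain ⟨h, hh⟩ := exists_conj_rep_eq hc g
  rw [← hh, hf₁, hf₂, heq]

section Extension

variable {c : ConjClasses G → G} (hc : ∀ q, ConjClasses.mk (c q) = q) (v : ConjClasses G → X)

noncomputable def twistedExtension (g : G) : X :=
  (exists_conj_rep_eq hc g).choose • v (ConjClasses.mk g)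

variable {hc v}

lemma twistedExtension_eq_smul (hv : ∀ q, Subgroup.centralizer {c q} ≤ stabilizer G (v q))
    {g h : G} (hh : h * c (ConjClasses.mk g) * h⁻¹ = g) :
    twistedExtension hc v g = h • v (ConjClasses.mk g) :=
  smul_eq_smul_of_conj_eq (hv _) ((exists_conj_rep_eq hc g).choose_spec.trans hh.symm)

lemma isTwistedClassFunction_twistedExtension
    (hv : ∀ q, Subgroup.centralizer {c q} ≤ stabilizer G (v q)) :
    IsTwistedClassFunction (twistedExtension hc v) := by
  intro g h
  obtain ⟨k, hk⟩ := exists_conj_rep_eq hc g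
  have hmk : ConjClasses.mk (h * g * h⁻¹) = ConjClasses.mk g :=
    ConjClasses.mk_eq_mk_iff_isConj.mpr (isConj_iff.mpr ⟨h⁻¹, by group⟩)
  have hconj : (h * k) * c (ConjClasses.mk (h * g * h⁻¹)) * (h * k)⁻¹ = h * g * h⁻¹ := by
    rw [hmk]
    calc _ = h * (k * c (ConjClasses.mk g) * k⁻¹) * h⁻¹ := by group
      _ = h * g * h⁻¹ := by rw [hk]
  rw [twistedExtension_eq_smul hv hconj, twistedExtension_eq_smul hv hk, hmk, mul_smul]

lemma twistedExtension_rep (hv : ∀ q, Subgroup.centralizer {c q} ≤ stabilizer G (v q))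
    (q : ConjClasses G) : twistedExtension hc v (c q) = v q := by
  rw [twistedExtension_eq_smul hv (h := 1) (by rw [hc]; group), hc, one_smul]

end Extension

end MulAction

open MulAction

lemma IntermediateField.mem_fixedField_iff_le_stabilizer {K L : Type*} [Field K] [Field L]
    [Algebra K L] (H : Subgroup (L ≃ₐ[K] L)) (x : L) :
    x ∈ fixedField H ↔ H ≤ stabilizer (L ≃ₐ[K] L) x := by
  simp only [mem_fixedField_iff, SetLike.le_def, mem_stabilizer_iff, AlgEquiv.smul_def]

theorem stmt8_general {K L : Type*} [Field K] [Field L] [Algebra K L]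
    (c : ConjClasses (L ≃ₐ[K] L) → (L ≃ₐ[K] L)) (hc : ∀ q, ConjClasses.mk (c q) = q) :
    (∀ f : (L ≃ₐ[K] L) → L, (∀ g h, f (h * g * h⁻¹) = h (f g)) →
      ∀ q, f (c q) ∈ IntermediateField.fixedField (Subgroup.centralizer {c q})) ∧
    (∀ f₁ f₂ : (L ≃ₐ[K] L) → L, (∀ g h, f₁ (h * g * h⁻¹) = h (f₁ g)) →
      (∀ g h, f₂ (h * g * h⁻¹) = h (f₂ g)) →
      (∀ q, f₁ (c q) = f₂ (c q)) → f₁ = f₂) ∧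
    (∀ v : ∀ q : ConjClasses (L ≃ₐ[K] L),
        IntermediateField.fixedField (Subgroup.centralizer {c q}),
      ∃ f : (L ≃ₐ[K] L) → L, (∀ g h, f (h * g * h⁻¹) = h (f g)) ∧
        ∀ q, f (c q) = (v q : L)) := by
  simp only [← AlgEquiv.smul_def, IntermediateField.mem_fixedField_iff_le_stabilizer]
  refine ⟨fun f hf q => IsTwistedClassFunction.centralizer_le_stabilizer hf _,
    fun f₁ f₂ hf₁ hf₂ => IsTwistedClassFunction.ext_of_eqOn_reps hc hf₁ hf₂, fun v => ?_⟩
  have hv q := (IntermediateField.mem_fixedField_iff_le_stabilizer _ _).mp (v q).2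
  exact ⟨twistedExtension hc (fun q => (v q : L)), isTwistedClassFunction_twistedExtension hv,
    twistedExtension_rep hv⟩

/-- For a finite Galois extension `L/K` with Galois group `G`, the `K`-algebra of
"twisted class functions" `f : G → L` (those with `f(hgh⁻¹) = h(f g)`) is isomorphic, as
a `K`-algebra, to `∏_{c ∈ S} L^{C_c}` where `S` is a set of representatives of the
conjugacy classes of `G` and `C_c` is the centralizer of `c`. The isomorphism sends `f`
to the tuple `(f c)_{c ∈ S}`; since all algebra operations on both sides are pointwise,
this is recorded by: evaluation at the representatives lands in the fixed fields, is
injective on twisted class functions, and surjects onto the product of fixed fields. -/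
theorem stmt8 {K L : Type*} [Field K] [Field L] [Algebra K L]
    [FiniteDimensional K L] [IsGalois K L]
    (c : ConjClasses (L ≃ₐ[K] L) → (L ≃ₐ[K] L)) (hc : ∀ q, ConjClasses.mk (c q) = q) :
    (∀ f : (L ≃ₐ[K] L) → L, (∀ g h, f (h * g * h⁻¹) = h (f g)) →
      ∀ q, f (c q) ∈ IntermediateField.fixedField (Subgroup.centralizer {c q})) ∧
    (∀ f₁ f₂ : (L ≃ₐ[K] L) → L, (∀ g h, f₁ (h * g * h⁻¹) = h (f₁ g)) →
      (∀ g h, f₂ (h * g * h⁻¹) = h (f₂ g)) →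
      (∀ q, f₁ (c q) = f₂ (c q)) → f₁ = f₂) ∧
    (∀ v : ∀ q : ConjClasses (L ≃ₐ[K] L),
        IntermediateField.fixedField (Subgroup.centralizer {c q}),
      ∃ f : (L ≃ₐ[K] L) → L, (∀ g h, f (h * g * h⁻¹) = h (f g)) ∧
        ∀ q, f (c q) = (v q : L)) :=
  stmt8_general c hc
end

section
/- Let G be a finite group and k a field of characteristic 0 (a subfield of an algebraically closed field k̄). The Galois group Gal(k̄/k) acts on the set of isomorphism classes of irreducible k̄-representations of G by twisting coefficients, and the orbits of this action are in bijection with the isomorphism classes of irreducible k-representations W of G, where the orbit corresponding to W consists of the irreducible summands of W ⊗_k k̄. -/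
universe u

/-- A bundled representation of `G` over the commutative ring `R`. -/
structure Rep' (R : Type u) [CommRing R] (G : Type u) [Group G] : Type (u + 1) where
  carrier : Type u
  [isAddCommGroup : AddCommGroup carrier]
  [isModule : Module R carrier]
  rho : Representation R G carrier

attribute [instance] Rep'.isAddCommGroup Rep'.isModule

/-- Irreducibility: the representation is nonzero and has no nontrivial invariant
submodules. -/
def Rep'.Irr {R : Type u} [CommRing R] {G : Type u} [Group G] (M : Rep' R G) : Prop :=
  Nontrivial M.carrier ∧
    ∀ U : Submodule R M.carrier, (∀ (g : G), ∀ v ∈ U, M.rho g v ∈ U) → U = ⊥ ∨ U = ⊤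

/-- Isomorphism of representations over `R`. -/
def Rep'.Iso {R : Type u} [CommRing R] {G : Type u} [Group G] (M N : Rep' R G) : Prop :=
  ∃ e : M.carrier ≃ₗ[R] N.carrier, ∀ (g : G) (v : M.carrier), e (M.rho g v) = N.rho g (e v)

/-- Two `k̄`-representations `V`, `W` of `G` are Galois twists of each other:
`σ(V) ≅ W` for some `σ ∈ Gal(k̄/k)`, i.e. there is a `σ`-semilinear `G`-equivariant
additive isomorphism `V ≃ W`. -/
def GalTwistEquiv (k : Type u) [Field k] {kb : Type u} [Field kb] [Algebra k kb]
    {G : Type u} [Group G] (M N : Rep' kb G) : Prop :=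
  ∃ (σ : kb ≃ₐ[k] kb) (e : M.carrier ≃+ N.carrier),
    (∀ (c : kb) (v : M.carrier), e (c • v) = σ c • e v) ∧
    ∀ (g : G) (v : M.carrier), e (M.rho g v) = N.rho g (e v)

/-- The `k̄`-representation `V` is a constituent of `W ⊗_k k̄`, for a `k`-representation
`W`: there is a nonzero `G`-equivariant `k̄`-linear map `k̄ ⊗_k W → V`. -/
def IsConstituent (k : Type u) [Field k] (kb : Type u) [Field kb] [Algebra k kb]
    {G : Type u} [Group G] (W : Rep' k G) (V : Rep' kb G) : Prop :=
  ∃ φ : TensorProduct k kb W.carrier →ₗ[kb] V.carrier, φ ≠ 0 ∧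
    ∀ (g : G) (x : TensorProduct k kb W.carrier),
      φ (LinearMap.baseChange kb (W.rho g) x) = V.rho g (φ x)

/-!
Two facts drive everything: a surjection of representations of `G` over `k̄` splits
`G`-equivariantly (average any section over `G`), and a nonzero intertwiner between irreducibles
is bijective (Schur).

(1) The `k`-span of the `G`-orbit of some `v ≠ 0` in `V` is finite-dimensional, hence contains an
irreducible `k`-subrepresentation `W`, and `c ⊗ w ↦ c • w` maps `k̄ ⊗ W` nontrivially to `V`.
(2) Splitting `k̄ ⊗ W' → V` gives a nonzero intertwiner `k̄ ⊗ W → k̄ ⊗ W'`, and a `k`-linear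
coordinate `k̄ → k` turns it into a nonzero intertwiner `W → W'`.
(3) Composing `k̄ ⊗ W → V` with `σ⁻¹ ⊗ id` shows that Galois twists of constituents are
constituents. Conversely, let `s` split `k̄ ⊗ W → V`. The `k̄`-span of all Galois twists of
`s(V)` is stable under `G` and `Gal(k̄/k)`; as the fixed field is `k`, Galois descent writes it
as `k̄ ⊗ U` with `U ⊆ W` stable under `G`, so it is everything. Hence `k̄ ⊗ W → V'` is nonzero on
some `(σ ⊗ id)(s(V))`, giving a `σ`-semilinear intertwiner `V → V'`, bijective by Schur.
-/

open TensorProduct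

section Schur

variable {R S G : Type u} [CommRing R] [CommRing S] [Group G] {τ : R →+* S} {N : Rep' S G}

theorem Rep'.Irr.injective_of_equivariant {M : Rep' R G} (hM : M.Irr)
    {f : M.carrier →ₛₗ[τ] N.carrier} (hf0 : f ≠ 0)
    (hf : ∀ g x, f (M.rho g x) = N.rho g (f x)) : Function.Injective f := by
  rw [← LinearMap.ker_eq_bot]
  refine (hM.2 _ fun g x hx => ?_).resolve_right fun h => hf0 (LinearMap.ker_eq_top.1 h)
  rw [LinearMap.mem_ker] at hx ⊢
  rw [hf, hx, map_zero]

theorem Rep'.Irr.surjective_of_equivariant [RingHomSurjective τ] (hN : N.Irr) {X : Type*}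
    [AddCommGroup X] [Module R X] {T : G → X → X} {f : X →ₛₗ[τ] N.carrier} (hf0 : f ≠ 0)
    (hf : ∀ g x, f (T g x) = N.rho g (f x)) : Function.Surjective f := by
  rw [← LinearMap.range_eq_top]
  refine (hN.2 _ ?_).resolve_left fun h => hf0 (LinearMap.range_eq_bot.1 h)
  rintro g _ ⟨x, rfl⟩
  exact ⟨T g x, hf g x⟩

end Schur

section ChangeOfScalars

variable {R A G M : Type*} [CommRing R] [CommRing A] [Algebra R A] [Monoid G] [AddCommGroup M]

variable (A) in
noncomputable def Representation.baseChange [Module R M] (ρ : Representation R G M) :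
    Representation A G (A ⊗[R] M) :=
  (Module.End.baseChangeHom R A M).toMonoidHom.comp ρ

@[simp]
theorem Representation.baseChange_apply [Module R M] (ρ : Representation R G M) (g : G) :
    ρ.baseChange A g = (ρ g).baseChange A := rfl

variable (R) in
def Representation.restrictScalars [Module A M] [Module R M] [IsScalarTower R A M]
    (ρ : Representation A G M) : Representation R G M where
  toFun g := (ρ g).restrictScalars R
  map_one' := by ext; simp
  map_mul' g h := by ext; simp

end ChangeOfScalars

theorem Representation.exists_equivariant_rightInverse {K G M N : Type*} [Field K] [Group G]
    [Fintype G] [AddCommGroup M] [Module K M] [AddCommGroup N] [Module K N]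
    (hG : (Fintype.card G : K) ≠ 0) {ρM : Representation K G M} {ρN : Representation K G N}
    {f : M →ₗ[K] N} (hf : Function.Surjective f) (hequiv : ∀ g x, f (ρM g x) = ρN g (f x)) :
    ∃ s : N →ₗ[K] M, f ∘ₗ s = LinearMap.id ∧ ∀ g y, s (ρN g y) = ρM g (s y) := by
  obtain ⟨s₀, hs₀⟩ := f.exists_rightInverse_of_surjective (LinearMap.range_eq_top.2 hf)
  refine ⟨(Fintype.card G : K)⁻¹ • ∑ g : G, ρM g ∘ₗ s₀ ∘ₗ ρN g⁻¹, ?_, fun h y => ?_⟩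
  · ext y
    have hconj (g : G) : f (ρM g (s₀ (ρN g⁻¹ y))) = y := by
      rw [hequiv, ← LinearMap.comp_apply f s₀, hs₀, LinearMap.id_apply,
        Representation.self_inv_apply]
    simp only [LinearMap.comp_apply, LinearMap.smul_apply, LinearMap.sum_apply,
      map_smul, map_sum, hconj, Finset.sum_const, Finset.card_univ, ← Nat.cast_smul_eq_nsmul K,
      smul_smul, inv_mul_cancel₀ hG, one_smul, LinearMap.id_apply]
  · simp only [LinearMap.smul_apply, LinearMap.sum_apply, LinearMap.comp_apply, map_smul, map_sum]
    congr 1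
    refine Fintype.sum_equiv (Equiv.mulLeft h⁻¹) _ _ fun g => ?_
    simp only [Equiv.coe_mulLeft, mul_inv_rev, inv_inv, map_mul, Module.End.mul_apply,
      Representation.self_inv_apply]

section Subrepresentation

variable {k G M : Type u} [Field k] [Group G] [AddCommGroup M] [Module k M]
  {ρ : Representation k G M}

theorem Subrepresentation.irr_of_isAtom {P : Subrepresentation ρ} (hP : IsAtom P) :
    (Rep'.mk P.toSubmodule P.toRepresentation).Irr := by
  have hP0 : P.toSubmodule ≠ ⊥ := fun h => hP.1 (Subrepresentation.toSubmodule_injective h)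
  refine ⟨Submodule.nontrivial_iff_ne_bot.2 hP0, fun U hU => ?_⟩
  let Q : Subrepresentation ρ :=
    ⟨U.map P.toSubmodule.subtype, by
      rintro g _ ⟨x, hx, rfl⟩
      exact ⟨_, hU g x hx, rfl⟩⟩
  have hmap_inj := Submodule.map_injective_of_injective P.toSubmodule.injective_subtype
  rcases hP.le_iff.1 (show Q ≤ P from Submodule.map_subtype_le _ _) with hQ | hQ
  · left
    apply hmap_inj
    rw [Submodule.map_bot]
    exact congrArg Subrepresentation.toSubmodule hQ
  · right
    apply hmap_inj
    rw [Submodule.map_subtype_top]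
    exact congrArg Subrepresentation.toSubmodule hQ

theorem Subrepresentation.exists_isAtom [FiniteDimensional k M] [Nontrivial M] :
    ∃ P : Subrepresentation ρ, IsAtom P := by
  have : WellFoundedLT (Subrepresentation ρ) :=
    StrictMono.wellFoundedLT (f := Subrepresentation.toSubmodule) fun _ _ h => h
  have := isAtomic_of_orderBot_wellFounded_lt (α := Subrepresentation ρ) wellFounded_lt
  obtain ⟨P, hP, -⟩ := (eq_bot_or_exists_atom_le (⊤ : Subrepresentation ρ)).resolve_left
    fun h => bot_ne_top (congrArg Subrepresentation.toSubmodule h).symm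
  exact ⟨P, hP⟩

def Subrepresentation.orbitSpan (ρ : Representation k G M) (v : M) : Subrepresentation ρ where
  toSubmodule := Submodule.span k (Set.range fun g => ρ g v)
  apply_mem_toSubmodule g := by
    refine fun x hx => (Submodule.span_le.2 ?_ : _ ≤ (Submodule.span k _).comap (ρ g)) hx
    rintro _ ⟨h, rfl⟩
    exact Submodule.subset_span ⟨g * h, by simp [map_mul]⟩

instance [Finite G] (v : M) : FiniteDimensional k (Subrepresentation.orbitSpan ρ v).toSubmodule :=
  FiniteDimensional.span_of_finite k (Set.finite_range _)

end Subrepresentation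

section Coordinates

variable {k A M N : Type*} [Field k] [CommRing A] [Algebra k A] [AddCommGroup M] [Module k M]
  [AddCommGroup N] [Module k N]

theorem TensorProduct.lid_rTensor_baseChange (ℓ : A →ₗ[k] k) (f : M →ₗ[k] N) (y : A ⊗[k] M) :
    TensorProduct.lid k N (ℓ.rTensor N (f.baseChange A y)) =
      f (TensorProduct.lid k M (ℓ.rTensor M y)) := by
  induction y using TensorProduct.induction_on with
  | zero => simp
  | tmul a m => simp
  | add y z hy hz => simp only [map_add, hy, hz]

theorem TensorProduct.exists_lid_rTensor_ne_zero {y : A ⊗[k] M} (hy : y ≠ 0) :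
    ∃ ℓ : A →ₗ[k] k, TensorProduct.lid k M (ℓ.rTensor M y) ≠ 0 := by
  classical
  let b := Module.Basis.ofVectorSpace k A
  obtain ⟨i, hi⟩ : ∃ i, equivFinsuppOfBasisLeft b y i ≠ 0 := by
    by_contra! h
    exact hy ((equivFinsuppOfBasisLeft b).map_eq_zero_iff.1 (Finsupp.ext h))
  exact ⟨b.coord i, by rwa [← equivFinsuppOfBasisLeft_apply]⟩

end Coordinates

instance AlgEquiv.ringHomSurjective {k A : Type*} [CommSemiring k] [Semiring A] [Algebra k A]
    (σ : A ≃ₐ[k] A) : RingHomSurjective (σ : A →+* A) :=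
  ⟨σ.surjective⟩

section GaloisTwist

variable {k A M N : Type*} [CommRing k] [CommRing A] [Algebra k A] [AddCommGroup M] [Module k M]
  [AddCommGroup N] [Module k N]

noncomputable def galTwist (σ : A ≃ₐ[k] A) : A ⊗[k] M →ₛₗ[(σ : A →+* A)] A ⊗[k] M where
  toFun := σ.toLinearMap.rTensor M
  map_add' := map_add _
  map_smul' c x := by
    induction x using TensorProduct.induction_on with
    | zero => simp
    | tmul a m => simp [smul_tmul']
    | add x y hx hy => simp only [smul_add, map_add, hx, hy]

@[simp]
theorem galTwist_tmul (σ : A ≃ₐ[k] A) (a : A) (m : M) : galTwist σ (a ⊗ₜ[k] m) = σ a ⊗ₜ m := rfl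

theorem galTwist_galTwist (σ τ : A ≃ₐ[k] A) (x : A ⊗[k] M) :
    galTwist τ (galTwist σ x) = galTwist (σ.trans τ) x := by
  induction x using TensorProduct.induction_on with
  | zero => rw [map_zero, map_zero, map_zero]
  | tmul a m => rw [galTwist_tmul, galTwist_tmul, galTwist_tmul, AlgEquiv.trans_apply]
  | add x y hx hy => rw [map_add, map_add, map_add, hx, hy]

theorem galTwist_refl (x : A ⊗[k] M) : galTwist AlgEquiv.refl x = x := by
  induction x using TensorProduct.induction_on with
  | zero => rw [map_zero]
  | tmul a m => rw [galTwist_tmul]; rfl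
  | add x y hx hy => rw [map_add, hx, hy]

theorem galTwist_baseChange (σ : A ≃ₐ[k] A) (f : M →ₗ[k] N) (x : A ⊗[k] M) :
    galTwist σ (f.baseChange A x) = f.baseChange A (galTwist σ x) := by
  induction x using TensorProduct.induction_on with
  | zero => simp
  | tmul a m => simp
  | add x y hx hy => simp only [map_add, hx, hy]

theorem Module.Basis.baseChange_repr_galTwist {ι : Type*} (b : Module.Basis ι k M)
    (σ : A ≃ₐ[k] A) (x : A ⊗[k] M) (i : ι) :
    (b.baseChange A).repr (galTwist σ x) i = σ ((b.baseChange A).repr x i) := by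
  induction x using TensorProduct.induction_on with
  | zero => simp
  | tmul a m => simp
  | add x y hx hy => simp only [map_add, Finsupp.add_apply, hx, hy]

end GaloisTwist

theorem Finsupp.card_support_lt_card_support {ι M : Type*} [Zero M] {f g : ι →₀ M}
    (h : ∀ j, f j = 0 → g j = 0) {i : ι} (hf : f i ≠ 0) (hg : g i = 0) :
    g.support.card < f.support.card := by
  refine Finset.card_lt_card ⟨fun j hj => ?_, fun hsub => ?_⟩
  · simp only [Finsupp.mem_support_iff] at hj ⊢
    exact fun hfj => hj (h j hfj)
  · simpa [hg] using hsub (Finsupp.mem_support_iff.2 hf)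

/-- One elimination step: `x - (xᵢ / yᵢ) • y` has smaller support than `x`. -/
theorem Module.Basis.mem_of_forall_card_support_lt {ι F X : Type*} [Field F] [AddCommGroup X]
    [Module F X] (B : Module.Basis ι F X) {Y Z : Submodule F X} {x y : X}
    (hZ : ∀ z ∈ Y, (B.repr z).support.card < (B.repr x).support.card → z ∈ Z)
    (hx : x ∈ Y) (hy : y ∈ Y) (hy0 : y ≠ 0) (hyx : ∀ j, B.repr x j = 0 → B.repr y j = 0)
    (hcard : (B.repr y).support.card < (B.repr x).support.card) : x ∈ Z := by
  obtain ⟨i, hi⟩ : ∃ i, B.repr y i ≠ 0 := by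
    by_contra! h
    exact hy0 (B.repr.map_eq_zero_iff.1 (Finsupp.ext h))
  set c := B.repr x i / B.repr y i
  have hx'Z : x - c • y ∈ Z := hZ _ (sub_mem hx (Y.smul_mem c hy)) <|
    Finsupp.card_support_lt_card_support (i := i) (fun j hj => by simp [hj, hyx j hj])
      (fun h => hi (hyx i h)) (by simp [c, hi])
  simpa using Z.add_mem hx'Z (Z.smul_mem c (hZ y hy hcard))

section Descent

variable {k kb M : Type*} [Field k] [Field kb] [Algebra k kb] [IsGalois k kb]
  [AddCommGroup M] [Module k M]

theorem mem_range_mk_one_of_forall_galTwist_eq {x : kb ⊗[k] M}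
    (hx : ∀ σ : kb ≃ₐ[k] kb, galTwist σ x = x) :
    x ∈ LinearMap.range (TensorProduct.mk k kb M 1) := by
  let b := Module.Basis.ofVectorSpace k M
  rw [← (b.baseChange kb).linearCombination_repr x, Finsupp.linearCombination_apply]
  refine Submodule.sum_mem _ fun i _ => ?_
  obtain ⟨d, hd⟩ := (InfiniteGalois.mem_range_algebraMap_iff_fixed
    ((b.baseChange kb).repr x i)).2 fun σ => by rw [← Module.Basis.baseChange_repr_galTwist, hx]
  refine ⟨d • b i, ?_⟩
  dsimp only
  rw [← hd, algebraMap_smul, Module.Basis.baseChange_apply, TensorProduct.mk_apply,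
    TensorProduct.tmul_smul]

theorem Submodule.baseChange_comap_mk_one_eq_of_forall_galTwist_mem
    (Y : Submodule kb (kb ⊗[k] M)) (hY : ∀ σ : kb ≃ₐ[k] kb, ∀ x ∈ Y, galTwist σ x ∈ Y) :
    ((Y.restrictScalars k).comap (TensorProduct.mk k kb M 1)).baseChange kb = Y := by
  refine le_antisymm ?_ fun x hx => ?_
  · rw [Submodule.baseChange_eq_span, Submodule.span_le]
    rintro _ ⟨w, hw, rfl⟩
    exact hw
  set Z := ((Y.restrictScalars k).comap (TensorProduct.mk k kb M 1)).baseChange kb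
  let B := (Module.Basis.ofVectorSpace k M).baseChange kb
  induction hn : (B.repr x).support.card using Nat.strong_induction_on generalizing x with
  | _ n ih =>
  subst hn
  obtain rfl | hx0 := eq_or_ne x 0
  · exact Z.zero_mem
  obtain ⟨i₀, hi₀⟩ : ∃ i, B.repr x i ≠ 0 := by
    by_contra! h
    exact hx0 (B.repr.map_eq_zero_iff.1 (Finsupp.ext h))
  -- Normalised so that `galTwist σ x' - x'` loses the coordinate `i₀`.
  set x' := (B.repr x i₀)⁻¹ • x
  suffices x' ∈ Z by simpa [x', hi₀] using Z.smul_mem (B.repr x i₀) this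
  have hx' : x' ∈ Y := Y.smul_mem _ hx
  have hx'i₀ : B.repr x' i₀ = 1 := by simp [x', hi₀]
  have hsupp : (B.repr x').support = (B.repr x).support := by
    simp [x', Finsupp.support_smul_eq (inv_ne_zero hi₀)]
  by_cases hfix : ∀ σ : kb ≃ₐ[k] kb, galTwist σ x' = x'
  · obtain ⟨w, hw⟩ := mem_range_mk_one_of_forall_galTwist_eq hfix
    rw [← hw]
    exact Submodule.tmul_mem_baseChange_of_mem 1 (show _ ∈ Y by rwa [hw])
  obtain ⟨σ, hσ⟩ := not_forall.1 hfix
  have hrepr (j) : B.repr (galTwist σ x' - x') j = σ (B.repr x' j) - B.repr x' j := by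
    simp [B, Module.Basis.baseChange_repr_galTwist]
  have hvanish (j) (hj : B.repr x' j = 0) : B.repr (galTwist σ x' - x') j = 0 := by
    rw [hrepr, hj, map_zero, sub_self]
  refine B.mem_of_forall_card_support_lt (fun z hz hlt => ih _ (hsupp ▸ hlt) z hz rfl) hx'
    (sub_mem (hY σ _ hx') hx') (sub_ne_zero.2 hσ) hvanish ?_
  exact Finsupp.card_support_lt_card_support hvanish (by rw [hx'i₀]; exact one_ne_zero)
    (by rw [hrepr, hx'i₀, map_one, sub_self])

end Descent

section Constituents

variable {k kb G : Type u} [Field k] [Field kb] [Algebra k kb] [Group G]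

theorem isConstituent_of_equivariant {W : Rep' k G} {V : Rep' kb G} [Module k V.carrier]
    [IsScalarTower k kb V.carrier] {f : W.carrier →ₗ[k] V.carrier} (hf0 : f ≠ 0)
    (hf : ∀ g w, f (W.rho g w) = V.rho g (f w)) : IsConstituent k kb W V := by
  refine ⟨f.liftBaseChange kb, fun h => hf0 ?_, fun g x => ?_⟩
  · ext w
    simpa using LinearMap.congr_fun h (1 ⊗ₜ w)
  · induction x using TensorProduct.induction_on with
    | zero => simp
    | tmul c w => simp [hf]
    | add x y hx hy => simp only [map_add, hx, hy]

theorem Rep'.exists_irr_isConstituent [Finite G] (V : Rep' kb G) [Nontrivial V.carrier] :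
    ∃ W : Rep' k G, W.Irr ∧ Module.Finite k W.carrier ∧ IsConstituent k kb W V := by
  let _ := Module.compHom V.carrier (algebraMap k kb)
  have : IsScalarTower k kb V.carrier := IsScalarTower.of_algebraMap_smul fun _ _ => rfl
  obtain ⟨v, hv⟩ := exists_ne (0 : V.carrier)
  let P₀ := Subrepresentation.orbitSpan (V.rho.restrictScalars k) v
  have : Nontrivial P₀.toSubmodule := Submodule.nontrivial_iff_ne_bot.2 fun h =>
    hv ((Submodule.eq_bot_iff _).1 h v (Submodule.subset_span ⟨1, by simp⟩))
  obtain ⟨P, hP⟩ := Subrepresentation.exists_isAtom (ρ := P₀.toRepresentation)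
  have hirr := Subrepresentation.irr_of_isAtom hP
  refine ⟨_, hirr, inferInstance, isConstituent_of_equivariant
    (f := P₀.toSubmodule.subtype ∘ₗ P.toSubmodule.subtype) ?_ fun g w => rfl⟩
  have := hirr.1
  obtain ⟨w, hw⟩ := exists_ne (0 : P.toSubmodule)
  exact fun h => hw (by simpa using LinearMap.congr_fun h w)

theorem Rep'.exists_equivariant_ne_zero_of_baseChange {W W' : Rep' k G}
    {θ : kb ⊗[k] W.carrier →ₗ[kb] kb ⊗[k] W'.carrier} (hθ0 : θ ≠ 0)
    (hθ : ∀ g x, θ ((W.rho g).baseChange kb x) = (W'.rho g).baseChange kb (θ x)) :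
    ∃ f : W.carrier →ₗ[k] W'.carrier, f ≠ 0 ∧ ∀ g w, f (W.rho g w) = W'.rho g (f w) := by
  obtain ⟨w₀, hw₀⟩ : ∃ w, θ (1 ⊗ₜ w) ≠ 0 := by
    by_contra! h
    exact hθ0 ((LinearMap.liftBaseChangeEquiv kb).symm.map_eq_zero_iff.1 (LinearMap.ext h))
  obtain ⟨ℓ, hℓ⟩ := TensorProduct.exists_lid_rTensor_ne_zero hw₀
  refine ⟨(TensorProduct.lid k W'.carrier).toLinearMap ∘ₗ ℓ.rTensor W'.carrier ∘ₗ
    θ.restrictScalars k ∘ₗ TensorProduct.mk k kb W.carrier 1,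
    fun h => hℓ (LinearMap.congr_fun h w₀), fun g w => ?_⟩
  have hθw := hθ g (1 ⊗ₜ w)
  rw [LinearMap.baseChange_tmul] at hθw
  simp only [LinearMap.comp_apply, LinearEquiv.coe_coe, LinearMap.coe_restrictScalars,
    TensorProduct.mk_apply, hθw, TensorProduct.lid_rTensor_baseChange]

theorem Rep'.iso_of_isConstituent [Finite G] [CharZero k] {W W' : Rep' k G} {V : Rep' kb G}
    (hW : W.Irr) (hW' : W'.Irr) (hV : V.Irr) (h : IsConstituent k kb W V)
    (h' : IsConstituent k kb W' V) : W.Iso W' := by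
  cases nonempty_fintype G
  have : CharZero kb := charZero_of_injective_algebraMap (algebraMap k kb).injective
  obtain ⟨φ, hφ0, hφ⟩ := h
  obtain ⟨φ', hφ'0, hφ'⟩ := h'
  obtain ⟨s, hs, hsφ⟩ := Representation.exists_equivariant_rightInverse
    (ρM := W'.rho.baseChange kb) (Nat.cast_ne_zero.2 Fintype.card_ne_zero)
    (hV.surjective_of_equivariant hφ'0 hφ') hφ'
  obtain ⟨f, hf0, hf⟩ := Rep'.exists_equivariant_ne_zero_of_baseChange (θ := s ∘ₗ φ)
    (fun hθ => hφ0 (by rw [← LinearMap.id_comp φ, ← hs, LinearMap.comp_assoc, hθ,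
      LinearMap.comp_zero]))
    (fun g x => by rw [LinearMap.comp_apply, hφ, hsφ]; rfl)
  exact ⟨.ofBijective f ⟨hW.injective_of_equivariant hf0 hf, hW'.surjective_of_equivariant hf0 hf⟩,
    hf⟩

theorem IsConstituent.of_galTwistEquiv {W : Rep' k G} {V V' : Rep' kb G}
    (h : IsConstituent k kb W V) (hVV' : GalTwistEquiv k V V') : IsConstituent k kb W V' := by
  obtain ⟨φ, hφ0, hφ⟩ := h
  obtain ⟨σ, e, he, heG⟩ := hVV'
  -- The `σ`-semilinearity of `e` cancels the `σ⁻¹`-semilinearity of `galTwist σ.symm`.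
  let ψ : kb ⊗[k] W.carrier →ₗ[kb] V'.carrier :=
    { toFun x := e (φ (galTwist σ.symm x))
      map_add' x y := by simp only [map_add]
      map_smul' c x := by
        rw [map_smulₛₗ, map_smul, he]
        simp }
  refine ⟨ψ, fun h0 => hφ0 (LinearMap.ext fun x => e.injective ?_), fun g x => ?_⟩
  · have := LinearMap.congr_fun h0 (galTwist σ x)
    simp only [LinearMap.coe_mk, AddHom.coe_mk, LinearMap.zero_apply, ψ] at this
    rw [galTwist_galTwist, AlgEquiv.self_trans_symm, galTwist_refl] at this
    rw [this, LinearMap.zero_apply, map_zero]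
  · simp only [LinearMap.coe_mk, AddHom.coe_mk, ψ]
    rw [galTwist_baseChange, hφ, heG]

theorem Rep'.Irr.eq_top_of_forall_galTwist_mem [IsGalois k kb] {W : Rep' k G} (hW : W.Irr)
    {Y : Submodule kb (kb ⊗[k] W.carrier)} (hY0 : Y ≠ ⊥)
    (hYG : ∀ g, ∀ x ∈ Y, (W.rho g).baseChange kb x ∈ Y)
    (hYσ : ∀ σ : kb ≃ₐ[k] kb, ∀ x ∈ Y, galTwist σ x ∈ Y) : Y = ⊤ := by
  have hUY := Submodule.baseChange_comap_mk_one_eq_of_forall_galTwist_mem Y hYσ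
  rcases hW.2 ((Y.restrictScalars k).comap (TensorProduct.mk k kb W.carrier 1))
    fun g w hw => by simpa using hYG g _ hw with hU | hU
  · rw [hU, Submodule.baseChange_bot] at hUY
    exact absurd hUY.symm hY0
  · rw [← hUY, hU, Submodule.baseChange_top]

theorem Rep'.Irr.span_galTwist_eq_top [IsGalois k kb] {W : Rep' k G} (hW : W.Irr)
    {V : Rep' kb G} {s : V.carrier →ₗ[kb] kb ⊗[k] W.carrier} (hs0 : s ≠ 0)
    (hs : ∀ g v, s (V.rho g v) = (W.rho g).baseChange kb (s v)) :
    Submodule.span kb (Set.range fun p : (kb ≃ₐ[k] kb) × V.carrier => galTwist p.1 (s p.2)) =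
      ⊤ := by
  refine hW.eq_top_of_forall_galTwist_mem ?_ (fun g x hx => ?_) (fun τ x hx => ?_)
  · obtain ⟨v, hv⟩ : ∃ v, s v ≠ 0 := not_forall.1 fun h => hs0 (LinearMap.ext h)
    refine fun h0 => hv ?_
    have := (Submodule.eq_bot_iff _).1 h0 _ (Submodule.subset_span ⟨(AlgEquiv.refl, v), rfl⟩)
    dsimp only at this
    rwa [galTwist_refl] at this
  · refine (Submodule.span_le.2 ?_ : _ ≤ (Submodule.span kb _).comap ((W.rho g).baseChange kb)) hx
    rintro _ ⟨⟨σ, v⟩, rfl⟩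
    exact Submodule.subset_span ⟨(σ, V.rho g v), by dsimp only; rw [hs, galTwist_baseChange]⟩
  · refine (Submodule.span_le.2 ?_ : _ ≤ (Submodule.span kb _).comap (galTwist τ)) hx
    rintro _ ⟨⟨σ, v⟩, rfl⟩
    exact Submodule.subset_span ⟨(σ.trans τ, v), (galTwist_galTwist σ τ _).symm⟩

theorem Rep'.galTwistEquiv_of_isConstituent [Finite G] [CharZero k] [IsGalois k kb]
    {W : Rep' k G} {V V' : Rep' kb G} (hW : W.Irr) (hV : V.Irr) (hV' : V'.Irr)
    (h : IsConstituent k kb W V) (h' : IsConstituent k kb W V') : GalTwistEquiv k V V' := by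
  cases nonempty_fintype G
  have : CharZero kb := charZero_of_injective_algebraMap (algebraMap k kb).injective
  obtain ⟨φ, hφ0, hφ⟩ := h
  obtain ⟨φ', hφ'0, hφ'⟩ := h'
  obtain ⟨s, hs, hsφ⟩ := Representation.exists_equivariant_rightInverse
    (ρM := W.rho.baseChange kb) (Nat.cast_ne_zero.2 Fintype.card_ne_zero)
    (hV.surjective_of_equivariant hφ0 hφ) hφ
  have hs0 : s ≠ 0 := by
    have := hV.1
    obtain ⟨v, hv⟩ := exists_ne (0 : V.carrier)
    exact fun h0 => hv (by simpa [h0] using (LinearMap.congr_fun hs v).symm)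
  obtain ⟨σ, v, hv⟩ : ∃ σ v, φ' (galTwist σ (s v)) ≠ 0 := by
    by_contra! h0
    refine hφ'0 (LinearMap.ker_eq_top.1 (eq_top_iff.2 ?_))
    rw [← hW.span_galTwist_eq_top hs0 hsφ, Submodule.span_le]
    rintro _ ⟨⟨σ, v⟩, rfl⟩
    exact h0 σ v
  let t := φ' ∘ₛₗ galTwist σ ∘ₛₗ s
  have ht0 : t ≠ 0 := fun h0 => hv (LinearMap.congr_fun h0 v)
  have ht : ∀ g v, t (V.rho g v) = V'.rho g (t v) := fun g v => by
    simp only [t, LinearMap.comp_apply]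
    rw [hsφ, Representation.baseChange_apply, galTwist_baseChange, hφ']
  exact ⟨σ, .ofBijective t ⟨hV.injective_of_equivariant ht0 ht,
    hV'.surjective_of_equivariant ht0 ht⟩, t.map_smulₛₗ, ht⟩

end Constituents

/-- For a finite group `G` and a field `k` of characteristic `0` with algebraic closure
`k̄`, the assignment sending an irreducible `k`-representation `W` to the irreducible
constituents of `W ⊗_k k̄` gives a bijection between isomorphism classes of irreducible
`k`-representations of `G` and the orbits of `Gal(k̄/k)` (acting by twisting coefficients)
on isomorphism classes of irreducible `k̄`-representations of `G`:
(1) every irreducible `k̄`-representation is a constituent of some irreducible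
`k`-representation; (2) that `k`-representation is unique up to isomorphism;
(3) two irreducible `k̄`-representations are constituents of the same irreducible
`k`-representation iff they are Galois twists of each other. -/
theorem stmt11 (k : Type u) [Field k] [CharZero k] (kb : Type u) [Field kb] [Algebra k kb]
    [IsAlgClosure k kb] (G : Type u) [Group G] [Finite G] :
    (∀ V : Rep' kb G, V.Irr → Module.Finite kb V.carrier →
      ∃ W : Rep' k G, W.Irr ∧ Module.Finite k W.carrier ∧ IsConstituent k kb W V) ∧
    (∀ (W W' : Rep' k G) (V : Rep' kb G), W.Irr → W'.Irr → V.Irr →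
      IsConstituent k kb W V → IsConstituent k kb W' V → W.Iso W') ∧
    (∀ (W : Rep' k G) (V V' : Rep' kb G), W.Irr → V.Irr → V'.Irr →
      IsConstituent k kb W V →
        (IsConstituent k kb W V' ↔ GalTwistEquiv k V V')) := by
  refine ⟨fun V hV _ => ?_, fun W W' V hW hW' hV h h' => Rep'.iso_of_isConstituent hW hW' hV h h',
    fun W V V' hW hV hV' h => ⟨Rep'.galTwistEquiv_of_isConstituent hW hV hV' h,
      h.of_galTwistEquiv⟩⟩
  have := hV.1
  exact Rep'.exists_irr_isConstituent V
end

section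
/- Let f: Y → X be a morphism of schemes and suppose f admits a set of sections S such that for every connected scheme Z, the map Maps(Z,X) × S → Maps(Z,Y), (g,s) ↦ s∘g, is a bijection (f is 'Yoneda trivial'). If the underlying topological space of Y is a disjoint union of its connected components and X is connected, then f is isomorphic over X to the projection ⊔_S X → X. -/
/-!
Decomposing the inclusion of a connected component `C` of `Y` as `(C ↪ Y ≫ f) ≫ t` with `t ∈ S`
shows that every section in `S` whose image meets `C` equals `t`, and then that `t` maps `X`
isomorphically onto `C`, with inverse `f` restricted to `C`. Hence the sections in `S` are open
immersions whose images are exactly the connected components of `Y`, one for each section, and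
`Sigma.desc` of them is an isomorphism `⊔_S X ≅ Y` over `X`.
-/

open AlgebraicGeometry CategoryTheory Limits

universe u

/-- `f : Y ⟶ X` is Yoneda trivial with distinguished set of sections `S`: every element
of `S` is a section of `f`, and for every connected scheme `Z` the composition map
`Maps(Z, X) × S → Maps(Z, Y)` is a bijection. -/
def YonedaTrivial {Y X : Scheme.{u}} (f : Y ⟶ X) (S : Set (X ⟶ Y)) : Prop :=
  (∀ s ∈ S, s ≫ f = 𝟙 X) ∧
    ∀ Z : Scheme.{u}, ConnectedSpace Z →
      Function.Bijective (fun p : (Z ⟶ X) × S => p.1 ≫ (p.2 : X ⟶ Y))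

lemma eq_of_comp_section_eq {C : Type*} [Category C] {X Y Z : C}
    {f : Y ⟶ X} {s t : X ⟶ Y} {g : Z ⟶ Y} {l : X ⟶ Z}
    (hs : s ≫ f = 𝟙 X) (hl : l ≫ g = s) (ht : (g ≫ f) ≫ t = g) : s = t := by
  calc s = l ≫ g := hl.symm
    _ = l ≫ (g ≫ f) ≫ t := by rw [ht]
    _ = (s ≫ f) ≫ t := by rw [← hl]; simp only [Category.assoc]
    _ = t := by rw [hs, Category.id_comp]

def connectedComponentOpens {Y : Scheme.{u}} (hY : ∀ y : Y, IsOpen (connectedComponent y))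
    (y : Y) : Y.Opens :=
  ⟨connectedComponent y, hY y⟩

instance {Y : Scheme.{u}} (hY : ∀ y : Y, IsOpen (connectedComponent y)) (y : Y) :
    ConnectedSpace (connectedComponentOpens hY y) :=
  Subtype.connectedSpace isConnected_connectedComponent

namespace YonedaTrivial

variable {Y X : Scheme.{u}} {f : Y ⟶ X} {S : Set (X ⟶ Y)}

lemma exists_comp_eq (h : YonedaTrivial f S) {Z : Scheme.{u}} [ConnectedSpace Z] (g : Z ⟶ Y) :
    ∃ t ∈ S, (g ≫ f) ≫ t = g := by
  obtain ⟨⟨k, t, ht⟩, hkt⟩ := (h.2 Z ‹_›).2 g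
  obtain rfl : k = g ≫ f := by rw [← hkt, Category.assoc, h.1 t ht, Category.comp_id]
  exact ⟨t, ht, hkt⟩

lemma comp_eq_of_fac (h : YonedaTrivial f S) {Z : Scheme.{u}} [ConnectedSpace Z] {g : Z ⟶ Y}
    {s : X ⟶ Y} (hs : s ∈ S) {l : X ⟶ Z} (hl : l ≫ g = s) : (g ≫ f) ≫ s = g := by
  obtain ⟨t, -, ht⟩ := h.exists_comp_eq g
  rwa [eq_of_comp_section_eq (h.1 s hs) hl ht]

lemma comp_eq_of_range_subset (h : YonedaTrivial f S) {U : Y.Opens} [ConnectedSpace U]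
    {s : X ⟶ Y} (hs : s ∈ S) (hsU : Set.range s ⊆ U) : (U.ι ≫ f) ≫ s = U.ι :=
  h.comp_eq_of_fac hs (IsOpenImmersion.lift_fac U.ι s (by rwa [U.range_ι]))

lemma eq_of_range_subset (h : YonedaTrivial f S) {U : Y.Opens} [ConnectedSpace U]
    {s s' : X ⟶ Y} (hs : s ∈ S) (hs' : s' ∈ S) (hsU : Set.range s ⊆ U)
    (hs'U : Set.range s' ⊆ U) : s = s' :=
  eq_of_comp_section_eq (h.1 s hs) (IsOpenImmersion.lift_fac U.ι s (by rwa [U.range_ι]))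
    (h.comp_eq_of_range_subset hs' hs'U)

lemma range_eq_connectedComponent [PreconnectedSpace X] (h : YonedaTrivial f S)
    (hY : ∀ y : Y, IsOpen (connectedComponent y)) {s : X ⟶ Y} (hs : s ∈ S) (x : X) :
    Set.range s = connectedComponent (s x) := by
  have hsub := (isPreconnected_range s.continuous).subset_connectedComponent ⟨x, rfl⟩
  refine hsub.antisymm ?_
  let U := connectedComponentOpens hY (s x)
  calc connectedComponent (s x) = Set.range U.ι := U.range_ι.symm
    _ = Set.range ((U.ι ≫ f) ≫ s) := by rw [h.comp_eq_of_range_subset hs hsub]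
    _ ⊆ Set.range s := by rintro _ ⟨z, rfl⟩; exact ⟨_, (Scheme.Hom.comp_apply _ _ z).symm⟩

lemma isOpenImmersion [ConnectedSpace X] (h : YonedaTrivial f S)
    (hY : ∀ y : Y, IsOpen (connectedComponent y)) {s : X ⟶ Y} (hs : s ∈ S) :
    IsOpenImmersion s := by
  obtain ⟨x⟩ := ConnectedSpace.toNonempty (α := X)
  let U := connectedComponentOpens hY (s x)
  have hsU : Set.range s ⊆ U := (h.range_eq_connectedComponent hY hs x).le
  let l := IsOpenImmersion.lift U.ι s (by rwa [U.range_ι])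
  have hl : l ≫ U.ι = s := IsOpenImmersion.lift_fac _ _ _
  have : IsIso l := ⟨U.ι ≫ f, by rw [← Category.assoc, hl, h.1 s hs], by
    rw [← cancel_mono U.ι, Category.assoc, Category.assoc, hl, ← Category.assoc,
      h.comp_eq_of_range_subset hs hsU, Category.id_comp]⟩
  rw [← hl]
  infer_instance

lemma pairwise_disjoint_range [PreconnectedSpace X] (h : YonedaTrivial f S)
    (hY : ∀ y : Y, IsOpen (connectedComponent y)) :
    Pairwise (Function.onFun Disjoint fun s : S => Set.range (s : X ⟶ Y)) := by
  intro s s' hne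
  refine Set.disjoint_left.2 fun y ⟨x, hx⟩ ⟨x', hx'⟩ => hne (Subtype.ext ?_)
  exact h.eq_of_range_subset (U := connectedComponentOpens hY y) s.2 s'.2
    (by rw [h.range_eq_connectedComponent hY s.2 x, hx]; rfl)
    (by rw [h.range_eq_connectedComponent hY s'.2 x', hx']; rfl)

lemma iUnion_range_eq_univ (h : YonedaTrivial f S)
    (hY : ∀ y : Y, IsOpen (connectedComponent y)) :
    ⋃ s : S, Set.range (s : X ⟶ Y) = Set.univ := by
  refine Set.eq_univ_of_forall fun y => ?_
  let U := connectedComponentOpens hY y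
  obtain ⟨t, ht, htU⟩ := h.exists_comp_eq U.ι
  obtain ⟨z, hz⟩ : y ∈ Set.range U.ι := by rw [U.range_ι]; exact mem_connectedComponent
  refine Set.mem_iUnion.2 ⟨⟨t, ht⟩, (U.ι ≫ f) z, ?_⟩
  change t _ = y
  rw [← Scheme.Hom.comp_apply, htU, hz]

lemma isIso_sigmaDesc [ConnectedSpace X] (h : YonedaTrivial f S)
    (hY : ∀ y : Y, IsOpen (connectedComponent y)) :
    IsIso (Sigma.desc fun s : S => (s : X ⟶ Y)) := by
  have := fun s : S => h.isOpenImmersion hY s.2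
  rw [isIso_iff_isOpenImmersion_and_surjective]
  exact ⟨isOpenImmersion_sigmaDesc _ _ (h.pairwise_disjoint_range hY),
    Surjective.sigmaDesc_of_union_range_eq_univ (h.iUnion_range_eq_univ hY)⟩

end YonedaTrivial

/-- If `f : Y ⟶ X` is Yoneda trivial with distinguished sections `S`, `X` is connected,
and the topological space of `Y` is the disjoint union of its connected components (i.e.
all connected components are open), then `f` is isomorphic over `X` to the projection
`⊔_S X → X`. -/
theorem stmt13 {Y X : Scheme.{u}} (f : Y ⟶ X) (S : Set (X ⟶ Y))
    (h : YonedaTrivial f S) [ConnectedSpace X]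
    (hY : ∀ y : Y, IsOpen (connectedComponent y)) :
    ∃ e : Y ≅ ∐ (fun _ : S => X), e.hom ≫ Sigma.desc (fun _ => 𝟙 X) = f := by
  have := h.isIso_sigmaDesc hY
  refine ⟨(asIso (Sigma.desc fun s : S => (s : X ⟶ Y))).symm, ?_⟩
  rw [Iso.symm_hom, asIso_inv, IsIso.inv_comp_eq]
  exact Sigma.hom_ext _ _ fun s => by rw [Sigma.ι_desc, Sigma.ι_desc_assoc, h.1 s s.2]
end

section
/- A Yoneda trivial morphism of schemes induces isomorphisms on residue fields: if f: Y → X is Yoneda trivial and y ∈ Y maps to x ∈ X, then the induced extension of residue fields k(x) → k(y) is an isomorphism. -/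
/-! Every point `y` lies on one of the sections, since `Spec k(y) ⟶ Y` factors through some
`s ∈ S`; and along a section `s` of `f`, the map `k(x) → k(s x)` has the left inverse induced by
`s`, which is injective as a map of fields. -/

open AlgebraicGeometry CategoryTheory

universe u

theorem RingHom.bijective_of_leftInverse {K L : Type*} [Semiring K] [Nontrivial K]
    [DivisionRing L] {φ : K →+* L} {ψ : L →+* K} (h : Function.LeftInverse ψ φ) :
    Function.Bijective φ :=
  ⟨h.injective, (h.rightInverse_of_injective ψ.injective).surjective⟩

theorem AlgebraicGeometry.Scheme.Hom.residueFieldMap_bijective_of_section {Y X : Scheme.{u}} {f : Y ⟶ X}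
    {s : X ⟶ Y} (hs : s ≫ f = 𝟙 X) (x : X) :
    Function.Bijective (f.residueFieldMap (s x)) := by
  have hx : f (s x) = x := by rw [← Scheme.Hom.comp_apply, hs]; rfl
  have hcomp : f.residueFieldMap (s x) ≫ s.residueFieldMap x =
      (X.residueFieldCongr hx).hom := by
    rw [← Scheme.residueFieldMap_comp, Scheme.Hom.residueFieldMap_congr hs,
      Scheme.residueFieldMap_id]
    exact Category.comp_id _
  refine RingHom.bijective_of_leftInverse
    (ψ := (s.residueFieldMap x ≫ (X.residueFieldCongr hx).inv).hom) fun a => ?_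
  rw [← CommRingCat.comp_apply, ← Category.assoc, hcomp, Iso.hom_inv_id, CommRingCat.id_apply]

theorem YonedaTrivial.exists_mem_apply_eq {Y X : Scheme.{u}} {f : Y ⟶ X} {S : Set (X ⟶ Y)}
    (h : YonedaTrivial f S) (y : Y) : ∃ s ∈ S, ∃ x, s x = y := by
  obtain ⟨⟨g, s, hs⟩, hgs⟩ := (h.2 _ inferInstance).2 (Y.fromSpecResidueField y)
  let pt : Spec (Y.residueField y) := default
  refine ⟨s, hs, g pt, ?_⟩
  simpa [Scheme.fromSpecResidueField_apply] using congrArg (fun m => m.base pt) hgs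

/-- A Yoneda trivial morphism of schemes induces isomorphisms on residue fields: for
`y ∈ Y` over `x = f(y)`, the induced map `k(x) → k(y)` is bijective. -/
theorem stmt14 {Y X : Scheme.{u}} (f : Y ⟶ X) (S : Set (X ⟶ Y))
    (h : YonedaTrivial f S) (y : Y) :
    Function.Bijective (f.residueFieldMap y) := by
  obtain ⟨s, hs, x, rfl⟩ := h.exists_mem_apply_eq y
  exact Scheme.Hom.residueFieldMap_bijective_of_section (h.1 s hs) x
end
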